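/- With notation as above (cyclic sequence ε : ZMod l → {−1, 0, 1}, free linear segments of level n), let m ≥ 1 and suppose (s₁, t₁) and (s₂, t₂) are two distinct free linear segments of level m + 1 of ε. Then the intervals of indices they occupy are disjoint modulo l: one cannot have s₁ < s₂ ≤ t₁ (with s₂, t₂ normalized so that s₁ ≤ s₂ < s₁ + l and t_i < s_i + l). -/

import Mathlib

/-- `(s, t)` is a free linear segment of level `n` of the cyclic sequence
`ε : ZMod l → ℤ` (indices taken modulo `l`). -/
def IsFreeSegment (l : ℕ) (ε : ZMod l → ℤ) (n : ℕ) (s t : ℤ) : Prop :=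
  s ≤ t ∧ t < s + l ∧ ε (s : ZMod l) = -1 ∧ ε (t : ZMod l) = 1 ∧
    (∑ i ∈ Finset.Icc s t, ε (i : ZMod l)) = 0 ∧
    (∀ j : ℤ, s ≤ j → j < t →
      -(n : ℤ) ≤ (∑ i ∈ Finset.Icc s j, ε (i : ZMod l)) ∧
        (∑ i ∈ Finset.Icc s j, ε (i : ZMod l)) < 0) ∧
    (∃ j₀ : ℤ, s ≤ j₀ ∧ j₀ < t ∧ (∑ i ∈ Finset.Icc s j₀, ε (i : ZMod l)) = -(n : ℤ))

/-!
If `s₁ < s₂ ≤ t₁`, the partial sum of the first segment up to `s₂ - 1` is negative, so every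
partial sum of the first segment is strictly smaller than the corresponding sum started at `s₂`.
If the second segment reaches its minimum `-(m + 1)` before `t₁`, the first segment would go below
`-(m + 1)` there; otherwise the second segment is still negative at `t₁`, while the first one has
returned to `0` at `t₁`, which forces the sum from `s₂` to `t₁` to be positive.
-/

open Finset

theorem Int.sum_Icc_eq_sum_Icc_sub_one_add_sum_Icc {M : Type*} [AddCommMonoid M] (f : ℤ → M)
    {a b c : ℤ} (hab : a ≤ b) (hbc : b ≤ c) :
    ∑ i ∈ Icc a c, f i = ∑ i ∈ Icc a (b - 1), f i + ∑ i ∈ Icc b c, f i := by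
  rw [← sum_union (disjoint_left.2 fun i hi hi' => by simp only [mem_Icc] at hi hi'; omega)]
  congr 1
  ext i
  simp only [mem_union, mem_Icc]
  omega

theorem IsFreeSegment.sum_Icc_lt_sum_Icc {l n : ℕ} {ε : ZMod l → ℤ} {s t : ℤ}
    (h : IsFreeSegment l ε n s t) {k j : ℤ} (hsk : s < k) (hkt : k ≤ t) (hkj : k ≤ j) :
    ∑ i ∈ Icc s j, ε (i : ZMod l) < ∑ i ∈ Icc k j, ε (i : ZMod l) := by
  have hneg := (h.2.2.2.2.2.1 (k - 1) (by omega) (by omega)).2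
  rw [Int.sum_Icc_eq_sum_Icc_sub_one_add_sum_Icc _ hsk.le hkj]
  omega

theorem freeSegments_disjoint_general (l : ℕ) (ε : ZMod l → ℤ) (m : ℕ)
    (s₁ t₁ s₂ t₂ : ℤ) (h₁ : IsFreeSegment l ε (m + 1) s₁ t₁)
    (h₂ : IsFreeSegment l ε (m + 1) s₂ t₂)
    (hs : s₁ < s₂) :
    ¬ s₂ ≤ t₁ := by
  intro hst
  obtain ⟨-, -, -, -, -, hbound₂, j₀, hsj₀, hj₀t, hmin₂⟩ := h₂
  rcases lt_or_ge j₀ t₁ with hj₀ | hj₀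
  · have hlow := (h₁.2.2.2.2.2.1 j₀ (by omega) hj₀).1
    have hlt := h₁.sum_Icc_lt_sum_Icc hs hst hsj₀
    omega
  · have hzero₁ := h₁.2.2.2.2.1
    have hneg₂ := (hbound₂ t₁ hst (by omega)).2
    have hlt := h₁.sum_Icc_lt_sum_Icc hs hst hst
    omega

/-- Two distinct free linear segments of level `m + 1` of a cyclic `{-1,0,1}`-valued
sequence occupy disjoint intervals of indices modulo `l`: with the segments normalized
so that `s₁ < s₂ < s₁ + l`, one cannot have `s₂ ≤ t₁`. -/
theorem freeSegments_disjoint (l : ℕ) (hl : 1 ≤ l) (ε : ZMod l → ℤ)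
    (hε : ∀ i, ε i = -1 ∨ ε i = 0 ∨ ε i = 1) (m : ℕ) (hm : 1 ≤ m)
    (s₁ t₁ s₂ t₂ : ℤ) (h₁ : IsFreeSegment l ε (m + 1) s₁ t₁)
    (h₂ : IsFreeSegment l ε (m + 1) s₂ t₂)
    (hs : s₁ < s₂) (hs' : s₂ < s₁ + l) :
    ¬ s₂ ≤ t₁ :=
  freeSegments_disjoint_general l ε m s₁ t₁ s₂ t₂ h₁ h₂ hs
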